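/- Every extreme point v of the polytope 𝒫' is half-integral, i.e., v_i ∈ {0, 1/2, 1} for every i ∈ 𝓕'. -/

import Mathlib

/-!
At an extreme point `v` of `𝒫'`, a direction `w` that keeps every tight constraint tight must
vanish, since `v ± t w` stays in `𝒫'` for small `t`. By submodularity of the rank, the tight sets
of each matroid are closed under `∪` and `∩`, and a maximal chain of them spans all of them
(uncrossing). So the tight constraints are spanned by two laminar families: the `M'`-chain with
the zero coordinates, and the `M₂`-chain with the sets of the remaining constraints, whose
right-hand sides are all half-integers. Replacing each member of a laminar family by its core
(what is left after removing the smaller members) turns both families into subpartitions, and a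
vector determined by its sums over two subpartitions is computed by elimination: a counting
argument always provides a one-element member. Hence `v` is half-integral, and `0 ≤ v ≤ 1`
leaves the values `0`, `1/2`, `1`.
-/

open scoped Classical
open Finset

/-- The rank function of a matroid: the maximum cardinality of an independent
subset of the given set. -/
noncomputable def matroidRank {α : Type*} (M : Matroid α) (S : Finset α) : ℕ :=
  (S.powerset.filter (fun I : Finset α => M.Indep ↑I)).sup Finset.card

section MatroidRank

variable {α : Type*} (M : Matroid α)

theorem matroidRank_eq_eRk (S : Finset α) : (matroidRank M S : ℕ∞) = M.eRk S := by
  obtain ⟨J, hJ⟩ := M.exists_isBasis' (S : Set α)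
  have hJfin : J.Finite := S.finite_toSet.subset hJ.subset
  rw [← hJ.encard_eq_eRk, hJfin.encard_eq_coe_toFinset_card, Nat.cast_inj]
  refine le_antisymm (Finset.sup_le fun I hI => ?_) (Finset.le_sup ?_)
  · rw [mem_filter, mem_powerset] at hI
    have := (hI.2.encard_le_eRk_of_subset (coe_subset.2 hI.1)).trans_eq hJ.encard_eq_eRk.symm
    rwa [Set.encard_coe_eq_coe_finsetCard, hJfin.encard_eq_coe_toFinset_card, Nat.cast_le] at this
  · simpa [Set.subset_def] using ⟨hJ.subset, hJ.indep⟩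

theorem matroidRank_inter_add_matroidRank_union_le [DecidableEq α] (A B : Finset α) :
    matroidRank M (A ∩ B) + matroidRank M (A ∪ B) ≤ matroidRank M A + matroidRank M B := by
  have := M.eRk_inter_add_eRk_union_le A B
  rw [← coe_inter, ← coe_union, ← matroidRank_eq_eRk, ← matroidRank_eq_eRk,
    ← matroidRank_eq_eRk, ← matroidRank_eq_eRk] at this
  exact_mod_cast this

theorem matroidRank_le_card (S : Finset α) : matroidRank M S ≤ S.card := by
  have := M.eRk_le_encard S
  rwa [← matroidRank_eq_eRk, Set.encard_coe_eq_coe_finsetCard, Nat.cast_le] at this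

@[simp] theorem matroidRank_empty : matroidRank M ∅ = 0 := by
  simpa using matroidRank_le_card M ∅

end MatroidRank

def SumsDetermine {E : Type*} (K : Type*) [AddCommMonoid K] (𝒮 : Finset (Finset E))
    (U : Finset E) : Prop :=
  ∀ w : E → K, (∀ S ∈ 𝒮, ∑ i ∈ S, w i = 0) → ∀ i ∈ U, w i = 0

section SumsDetermine

variable {E K : Type*}

theorem SumsDetermine.card_le [Field K] [Fintype E] {𝒮 : Finset (Finset E)} {U : Finset E}
    (h : SumsDetermine K 𝒮 U) : U.card ≤ 𝒮.card := by
  let Φ : (E → K) →ₗ[K] (𝒮 → K) × (↥Uᶜ → K) :=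
    (LinearMap.pi fun S : 𝒮 => ∑ i ∈ S.1, LinearMap.proj i).prod
      (LinearMap.pi fun j : ↥Uᶜ => LinearMap.proj j.1)
  have hΦ : Function.Injective Φ := by
    rw [← LinearMap.ker_eq_bot, LinearMap.ker_eq_bot']
    intro w hw
    simp only [Φ, LinearMap.prod_apply, Function.prod_apply, Prod.ext_iff, funext_iff,
      LinearMap.pi_apply, LinearMap.coe_sum, LinearMap.coe_proj, Finset.sum_apply, Function.eval,
      Prod.fst_zero, Prod.snd_zero, Pi.zero_apply, Subtype.forall, mem_compl] at hw
    funext i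
    by_cases hi : i ∈ U
    · exact h w hw.1 i hi
    · exact hw.2 i hi
  have := LinearMap.finrank_le_finrank_of_injective hΦ
  simp only [Module.finrank_fintype_fun_eq_card, Module.finrank_prod, Fintype.card_coe,
    mem_compl, Fintype.card_subtype_compl] at this
  have := U.card_le_univ
  omega

theorem SumsDetermine.image_erase [DecidableEq E] [AddCommMonoid K] {𝒮 : Finset (Finset E)}
    {U : Finset E} (h : SumsDetermine K 𝒮 U) (i₀ : E) :
    SumsDetermine K (𝒮.image (·.erase i₀)) (U.erase i₀) := by
  intro w hw i hi
  have hsum : ∀ S : Finset E, ∑ x ∈ S, Function.update w i₀ 0 x = ∑ x ∈ S.erase i₀, w x :=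
    fun S => by
      rw [← sum_erase _ (Function.update_self i₀ 0 w)]
      exact sum_congr rfl fun x hx => Function.update_of_ne (ne_of_mem_erase hx) _ _
  have := h _ (fun S hS => (hsum S).trans (hw _ (mem_image_of_mem _ hS))) i (mem_of_mem_erase hi)
  rwa [Function.update_of_ne (ne_of_mem_erase hi)] at this

theorem SumsDetermine.filter_nonempty [AddCommMonoid K] {𝒮 : Finset (Finset E)}
    {U : Finset E} (h : SumsDetermine K 𝒮 U) : SumsDetermine K (𝒮.filter Finset.Nonempty) U :=
  fun w hw => h w fun S hS => S.eq_empty_or_nonempty.elim (fun hS' => hS' ▸ sum_empty)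
    fun hS' => hw S (mem_filter.2 ⟨hS, hS'⟩)

theorem two_mul_card_le_card_biUnion [DecidableEq E] {P : Finset (Finset E)}
    (hd : (P : Set (Finset E)).PairwiseDisjoint id) (hcard : ∀ S ∈ P, 2 ≤ S.card) :
    2 * P.card ≤ (P.biUnion id).card := by
  rw [card_biUnion hd, mul_comm]
  exact card_nsmul_le_sum P card 2 hcard

/-- Without a member of size one, the two subpartitions have at most `|U|` members in total, and
in the extremal case both cover `U`; then the sum over one member is determined by the others, so
it can be dropped, against `SumsDetermine.card_le`. -/
theorem not_sumsDetermine_of_two_le_card [DecidableEq E] [Field K] [Fintype E] {U : Finset E}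
    {P₁ P₂ : Finset (Finset E)} (hU : U.Nonempty) (hsub : ∀ S ∈ P₁ ∪ P₂, S ⊆ U)
    (hd₁ : (P₁ : Set (Finset E)).PairwiseDisjoint id)
    (hd₂ : (P₂ : Set (Finset E)).PairwiseDisjoint id) (hcard : ∀ S ∈ P₁ ∪ P₂, 2 ≤ S.card) :
    ¬ SumsDetermine K (P₁ ∪ P₂) U := by
  intro h
  have hb₁ : P₁.biUnion id ⊆ U := biUnion_subset.2 fun S hS => hsub S (mem_union_left _ hS)
  have hb₂ : P₂.biUnion id ⊆ U := biUnion_subset.2 fun S hS => hsub S (mem_union_right _ hS)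
  have hc₁ := two_mul_card_le_card_biUnion hd₁ fun S hS => hcard S (mem_union_left _ hS)
  have hc₂ := two_mul_card_le_card_biUnion hd₂ fun S hS => hcard S (mem_union_right _ hS)
  have hU₁ := card_le_card hb₁
  have hU₂ := card_le_card hb₂
  have hrank := h.card_le
  have hunion := card_union_le P₁ P₂
  have hcover₁ : P₁.biUnion id = U := eq_of_subset_of_card_le hb₁ (by omega)
  have hcover₂ : P₂.biUnion id = U := eq_of_subset_of_card_le hb₂ (by omega)
  obtain ⟨S₀, hS₀, -⟩ := biUnion_nonempty.1 (hcover₁ ▸ hU)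
  have h' : SumsDetermine K (P₁.erase S₀ ∪ P₂) U := by
    intro w hw
    have hw₁ : ∀ S ∈ P₁.erase S₀, ∑ i ∈ S, w i = 0 := fun S hS => hw S (mem_union_left _ hS)
    have hw₂ : ∀ S ∈ P₂, ∑ i ∈ S, w i = 0 := fun S hS => hw S (mem_union_right _ hS)
    have hS₀ : ∑ i ∈ S₀, w i = 0 := by
      have e₁ := sum_biUnion (f := w) hd₁
      have e₂ := sum_biUnion (f := w) hd₂
      simp only [id] at e₁ e₂
      rw [hcover₁, ← add_sum_erase _ _ hS₀, sum_eq_zero hw₁, add_zero] at e₁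
      rw [hcover₂, sum_eq_zero hw₂] at e₂
      exact e₁.symm.trans e₂
    refine h w fun S hS => ?_
    rcases eq_or_ne S S₀ with rfl | hne
    · exact hS₀
    · rcases mem_union.1 hS with hS | hS
      · exact hw₁ S (mem_erase.2 ⟨hne, hS⟩)
      · exact hw₂ S hS
  have := h'.card_le
  have := card_union_le (P₁.erase S₀) P₂
  have := card_erase_of_mem hS₀
  have : 0 < P₁.card := card_pos.2 ⟨S₀, hS₀⟩
  omega

theorem AddSubgroup.sum_erase_mem [DecidableEq E] [AddCommGroup K] (G : AddSubgroup K)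
    {v : E → K} {S : Finset E} {i₀ : E} (hS : ∑ i ∈ S, v i ∈ G) (hi₀ : v i₀ ∈ G) :
    ∑ i ∈ S.erase i₀, v i ∈ G := by
  by_cases h : i₀ ∈ S
  · rw [sum_erase_eq_sub h]
    exact G.sub_mem hS hi₀
  · rwa [erase_eq_of_notMem h]

theorem Set.PairwiseDisjoint.image_finset_erase [DecidableEq E] {P : Finset (Finset E)}
    (hd : (P : Set (Finset E)).PairwiseDisjoint id) (i₀ : E) :
    (↑(P.image (·.erase i₀)) : Set (Finset E)).PairwiseDisjoint id := by
  rw [coe_image]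
  exact hd.image_of_le fun S => erase_subset i₀ S

/-- Total unimodularity of two subpartitions, by elimination: a member of size one fixes one
coordinate, which is then deleted; if there is none, `not_sumsDetermine_of_two_le_card`. -/
theorem SumsDetermine.mem_of_pairwiseDisjoint [DecidableEq E] [Field K] [Fintype E]
    (G : AddSubgroup K) {U : Finset E} {P₁ P₂ : Finset (Finset E)} {v : E → K}
    (hsub : ∀ S ∈ P₁ ∪ P₂, S ⊆ U) (hd₁ : (P₁ : Set (Finset E)).PairwiseDisjoint id)
    (hd₂ : (P₂ : Set (Finset E)).PairwiseDisjoint id) (hv : ∀ S ∈ P₁ ∪ P₂, ∑ i ∈ S, v i ∈ G)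
    (h : SumsDetermine K (P₁ ∪ P₂) U) : ∀ i ∈ U, v i ∈ G := by
  induction U using Finset.strongInduction generalizing P₁ P₂ with
  | H U ih =>
  by_cases hleaf : ∃ i₀, {i₀} ∈ P₁ ∪ P₂
  · obtain ⟨i₀, hi₀⟩ := hleaf
    have hvi₀ : v i₀ ∈ G := by simpa using hv _ hi₀
    intro i hi
    rcases eq_or_ne i i₀ with rfl | hne
    · exact hvi₀
    refine ih (U.erase i₀) (erase_ssubset (hsub _ hi₀ (mem_singleton_self _)))
      (P₁ := P₁.image (·.erase i₀)) (P₂ := P₂.image (·.erase i₀)) ?_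
      (hd₁.image_finset_erase i₀) (hd₂.image_finset_erase i₀) ?_ ?_ i (mem_erase.2 ⟨hne, hi⟩)
    · rw [← image_union]
      intro T hT
      obtain ⟨S, hS, rfl⟩ := mem_image.1 hT
      exact erase_subset_erase _ (hsub S hS)
    · rw [← image_union]
      intro T hT
      obtain ⟨S, hS, rfl⟩ := mem_image.1 hT
      exact G.sum_erase_mem (hv S hS) hvi₀
    · rw [← image_union]
      exact h.image_erase i₀
  · intro i hi
    refine absurd (filter_union Finset.Nonempty P₁ P₂ ▸ h.filter_nonempty)
      (not_sumsDetermine_of_two_le_card ⟨i, hi⟩ ?_ (hd₁.subset (filter_subset _ _))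
        (hd₂.subset (filter_subset _ _)) ?_)
    · rw [← filter_union]
      exact fun S hS => hsub S (mem_filter.1 hS).1
    · rw [← filter_union]
      intro S hS
      obtain ⟨hS, hne⟩ := mem_filter.1 hS
      have h1 : S.card ≠ 1 := fun h1 => by
        obtain ⟨i₀, rfl⟩ := card_eq_one.1 h1
        exact hleaf ⟨i₀, hS⟩
      have := hne.card_pos
      omega

end SumsDetermine

section Laminar

variable {α : Type*}

def IsLaminar (𝒜 : Set (Finset α)) : Prop :=
  𝒜.Pairwise fun A B => A ⊆ B ∨ B ⊆ A ∨ Disjoint A B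

variable {β : Type*} {𝒜 ℬ : Set (Finset α)}

theorem IsLaminar.mono (h : IsLaminar ℬ) (h𝒜ℬ : 𝒜 ⊆ ℬ) : IsLaminar 𝒜 :=
  Set.Pairwise.mono h𝒜ℬ h

theorem IsChain.isLaminar (h : IsChain (· ⊆ ·) 𝒜) : IsLaminar 𝒜 :=
  Set.Pairwise.mono' (fun _ _ hAB => hAB.elim Or.inl fun h => Or.inr (Or.inl h)) h

theorem IsLaminar.union (h𝒜 : IsLaminar 𝒜) (hℬ : IsLaminar ℬ)
    (h : ∀ A ∈ 𝒜, ∀ B ∈ ℬ, A ⊆ B ∨ B ⊆ A ∨ Disjoint A B) : IsLaminar (𝒜 ∪ ℬ) :=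
  Set.pairwise_union.2 ⟨h𝒜, hℬ, fun A hA B hB _ => ⟨h A hA B hB, by
    rcases h A hA B hB with h | h | h
    exacts [Or.inr (Or.inl h), Or.inl h, Or.inr (Or.inr h.symm)]⟩⟩

theorem IsLaminar.insert_univ [Fintype α] (h : IsLaminar 𝒜) : IsLaminar (insert univ 𝒜) :=
  h.insert fun B _ _ => ⟨Or.inr (Or.inl (subset_univ B)), Or.inl (subset_univ B)⟩

theorem IsLaminar.union_range_singleton (h : IsLaminar 𝒜) :
    IsLaminar (𝒜 ∪ Set.range singleton) := by
  refine h.union ?_ ?_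
  · rintro _ ⟨i, rfl⟩ _ ⟨j, rfl⟩ -
    rcases eq_or_ne i j with rfl | hij
    · exact Or.inl (Subset.refl _)
    · exact Or.inr (Or.inr (disjoint_singleton.2 hij))
  · rintro A - _ ⟨i, rfl⟩
    by_cases hi : i ∈ A
    · exact Or.inr (Or.inl (singleton_subset_iff.2 hi))
    · exact Or.inr (Or.inr (disjoint_singleton_right.2 hi))

theorem IsLaminar.image_map (f : α ↪ β) (h : IsLaminar 𝒜) : IsLaminar ((·.map f) '' 𝒜) :=
  Set.Pairwise.image fun A _ B _ hAB => by
    simpa only [Function.onFun, map_subset_map, Finset.disjoint_map] using h ‹_› ‹_› hAB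

theorem isLaminar_range_union_range {ι : Type*} {F G : ι → Finset α} (hFG : ∀ j, F j ⊆ G j)
    (hG : ∀ j k, j ≠ k → Disjoint (G j) (G k)) : IsLaminar (Set.range F ∪ Set.range G) := by
  rintro _ (⟨j, rfl⟩ | ⟨j, rfl⟩) _ (⟨k, rfl⟩ | ⟨k, rfl⟩) hne <;>
    rcases eq_or_ne j k with rfl | hjk
  · exact absurd rfl hne
  · exact Or.inr (Or.inr ((hG j k hjk).mono (hFG j) (hFG k)))
  · exact Or.inl (hFG j)
  · exact Or.inr (Or.inr ((hG j k hjk).mono_left (hFG j)))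
  · exact Or.inr (Or.inl (hFG j))
  · exact Or.inr (Or.inr ((hG j k hjk).mono_right (hFG k)))
  · exact absurd rfl hne
  · exact Or.inr (Or.inr (hG j k hjk))

variable [DecidableEq α]

noncomputable def laminarCore (L : Finset (Finset α)) (S : Finset α) : Finset α :=
  S \ (L.filter (· ⊂ S)).biUnion id

theorem laminarCore_subset (L : Finset (Finset α)) (S : Finset α) : laminarCore L S ⊆ S :=
  sdiff_subset

variable {L : Finset (Finset α)}

theorem disjoint_laminarCore_of_ssubset {A B : Finset α} (hA : A ∈ L) (hAB : A ⊂ B) :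
    Disjoint (laminarCore L A) (laminarCore L B) :=
  disjoint_right.2 fun _ hxB hxA => (mem_sdiff.1 hxB).2 <|
    mem_biUnion.2 ⟨A, mem_filter.2 ⟨hA, hAB⟩, laminarCore_subset L A hxA⟩

theorem IsLaminar.pairwiseDisjoint_laminarCore (hL : IsLaminar (L : Set (Finset α))) :
    (L : Set (Finset α)).PairwiseDisjoint (laminarCore L) := by
  intro A hA B hB hne
  rcases hL hA hB hne with h | h | h
  · exact disjoint_laminarCore_of_ssubset hA (ssubset_of_subset_of_ne h hne)
  · exact (disjoint_laminarCore_of_ssubset hB (ssubset_of_subset_of_ne h hne.symm)).symm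
  · exact h.mono (laminarCore_subset L A) (laminarCore_subset L B)

theorem IsLaminar.pairwiseDisjoint_image_laminarCore (hL : IsLaminar (L : Set (Finset α))) :
    (↑(L.image (laminarCore L)) : Set (Finset α)).PairwiseDisjoint id := by
  rw [coe_image]
  exact hL.pairwiseDisjoint_laminarCore.image

theorem biUnion_laminarCore {S : Finset α} (hS : S ∈ L) :
    (L.filter (· ⊆ S)).biUnion (laminarCore L) = S := by
  refine Subset.antisymm (biUnion_subset.2 fun T hT => (laminarCore_subset L T).trans
    (mem_filter.1 hT).2) fun x hx => ?_
  -- the smallest member of `L` between `x` and `S` has `x` in its core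
  obtain ⟨T, hT, hTmin⟩ := exists_min_image (L.filter fun T => x ∈ T ∧ T ⊆ S) card
    ⟨S, mem_filter.2 ⟨hS, hx, Subset.refl S⟩⟩
  obtain ⟨hTL, hxT, hTS⟩ := mem_filter.1 hT
  refine mem_biUnion.2 ⟨T, mem_filter.2 ⟨hTL, hTS⟩, mem_sdiff.2 ⟨hxT, fun hx' => ?_⟩⟩
  obtain ⟨T', hT', hxT'⟩ := mem_biUnion.1 hx'
  obtain ⟨hT'L, hT'T⟩ := mem_filter.1 hT'
  have := hTmin T' (mem_filter.2 ⟨hT'L, hxT', hT'T.subset.trans hTS⟩)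
  exact absurd (card_lt_card hT'T) (not_lt.2 this)

theorem IsLaminar.sum_eq_sum_laminarCore {M : Type*} [AddCommMonoid M]
    (hL : IsLaminar (L : Set (Finset α))) {S : Finset α} (hS : S ∈ L) (f : α → M) :
    ∑ i ∈ S, f i = ∑ T ∈ L.filter (· ⊆ S), ∑ i ∈ laminarCore L T, f i := by
  conv_lhs => rw [← biUnion_laminarCore hS]
  exact sum_biUnion (hL.pairwiseDisjoint_laminarCore.subset (coe_subset.2 (filter_subset _ _)))

theorem IsLaminar.sum_eq_zero_of_sum_laminarCore_eq_zero {M : Type*} [AddCommMonoid M]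
    (hL : IsLaminar (L : Set (Finset α))) {w : α → M}
    (hw : ∀ T ∈ L, ∑ i ∈ laminarCore L T, w i = 0) {S : Finset α} (hS : S ∈ L) :
    ∑ i ∈ S, w i = 0 := by
  rw [hL.sum_eq_sum_laminarCore hS]
  exact sum_eq_zero fun T hT => hw T (mem_filter.1 hT).1

theorem IsLaminar.sum_laminarCore_mem {M : Type*} [AddCommGroup M] (G : AddSubgroup M)
    (hL : IsLaminar (L : Set (Finset α))) {v : α → M} (hv : ∀ S ∈ L, ∑ i ∈ S, v i ∈ G)
    {S : Finset α} (hS : S ∈ L) : ∑ i ∈ laminarCore L S, v i ∈ G := by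
  induction S using Finset.strongInduction with
  | H S ih =>
  have hdecomp := hL.sum_eq_sum_laminarCore hS v
  rw [← add_sum_erase (L.filter (· ⊆ S)) _ (mem_filter.2 ⟨hS, Subset.refl S⟩)] at hdecomp
  rw [eq_sub_of_add_eq hdecomp.symm]
  refine G.sub_mem (hv S hS) (G.sum_mem fun T hT => ?_)
  obtain ⟨hne, hT⟩ := mem_erase.1 hT
  obtain ⟨hTL, hTS⟩ := mem_filter.1 hT
  exact ih T (ssubset_of_subset_of_ne hTS hne) hTL

end Laminar

theorem IsLaminar.mem_of_sumsDetermine {E K : Type*} [DecidableEq E] [Field K] [Fintype E]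
    (G : AddSubgroup K) {L₁ L₂ : Finset (Finset E)} (h₁ : IsLaminar (L₁ : Set (Finset E)))
    (h₂ : IsLaminar (L₂ : Set (Finset E))) {v : E → K} (hv : ∀ S ∈ L₁ ∪ L₂, ∑ i ∈ S, v i ∈ G)
    (h : SumsDetermine K (L₁ ∪ L₂) univ) (i : E) : v i ∈ G := by
  refine SumsDetermine.mem_of_pairwiseDisjoint G (P₁ := L₁.image (laminarCore L₁))
    (P₂ := L₂.image (laminarCore L₂)) (fun _ _ => subset_univ _)
    h₁.pairwiseDisjoint_image_laminarCore h₂.pairwiseDisjoint_image_laminarCore ?_ ?_ i (mem_univ i)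
  · intro T hT
    rcases mem_union.1 hT with hT | hT <;> obtain ⟨S, hS, rfl⟩ := mem_image.1 hT
    · exact h₁.sum_laminarCore_mem G (fun S hS => hv S (mem_union_left _ hS)) hS
    · exact h₂.sum_laminarCore_mem G (fun S hS => hv S (mem_union_right _ hS)) hS
  · intro w hw
    refine h w fun S hS => ?_
    rcases mem_union.1 hS with hS | hS
    · exact h₁.sum_eq_zero_of_sum_laminarCore_eq_zero
        (fun T hT => hw _ (mem_union_left _ (mem_image_of_mem _ hT))) hS
    · exact h₂.sum_eq_zero_of_sum_laminarCore_eq_zero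
        (fun T hT => hw _ (mem_union_right _ (mem_image_of_mem _ hT))) hS

section Chain

variable {α : Type*}

theorem exists_maximal_isChain_subset (T : Finset (Finset α)) :
    ∃ C ⊆ T, IsChain (· ⊆ ·) (C : Set (Finset α)) ∧
      ∀ X ∈ T, (∀ Y ∈ C, X ⊆ Y ∨ Y ⊆ X) → X ∈ C := by
  set chains := T.powerset.filter fun C : Finset (Finset α) => IsChain (· ⊆ ·) (C : Set (Finset α))
  obtain ⟨C, hC, hmax⟩ := chains.exists_maximal ⟨∅, mem_filter.2 ⟨empty_mem_powerset T, by simp⟩⟩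
  obtain ⟨hCT, hC⟩ := mem_filter.1 hC
  refine ⟨C, mem_powerset.1 hCT, hC, fun X hX hXC => ?_⟩
  have hins : insert X C ∈ chains :=
    mem_filter.2 ⟨mem_powerset.2 (insert_subset hX (mem_powerset.1 hCT)),
      coe_insert X C ▸ hC.insert fun Y hY _ => hXC Y hY⟩
  exact hmax hins (subset_insert X C) (mem_insert_self X C)

theorem IsChain.exists_greatest_ssubset {C : Finset (Finset α)}
    (hC : IsChain (· ⊆ ·) (C : Set (Finset α))) {Y₀ Y : Finset α} (hY₀ : Y₀ ∈ C) (hY₀Y : Y₀ ⊂ Y) :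
    ∃ Y' ∈ C, Y' ⊂ Y ∧ ∀ Z ∈ C, Z ⊂ Y → Z ⊆ Y' := by
  obtain ⟨Y', hY', hmax⟩ := exists_max_image (C.filter (· ⊂ Y)) card
    ⟨Y₀, mem_filter.2 ⟨hY₀, hY₀Y⟩⟩
  obtain ⟨hY'C, hY'Y⟩ := mem_filter.1 hY'
  refine ⟨Y', hY'C, hY'Y, fun Z hZ hZY => ?_⟩
  rcases hC.total hZ hY'C with h | h
  · exact h
  · exact (eq_of_subset_of_card_le h (hmax Z (mem_filter.2 ⟨hZ, hZY⟩))).ge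

/-- Uncrossing: a maximal chain in a lattice of sets spans it, because for the smallest chain
member `Y ⊇ S` and its predecessor `Y'`, the set `S ∪ Y'` is comparable with the whole chain
and hence equals `Y`, so `S` is expressed through `Y`, `Y'` and the smaller set `S ∩ Y'`. -/
theorem IsChain.sum_eq_zero_of_maximal [DecidableEq α] {M : Type*} [AddCommGroup M]
    {T C : Finset (Finset α)} (hempty : ∅ ∈ T) (hsup : SupClosed (T : Set (Finset α)))
    (hinf : InfClosed (T : Set (Finset α)))
    (hCT : C ⊆ T) (hC : IsChain (· ⊆ ·) (C : Set (Finset α)))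
    (hmax : ∀ X ∈ T, (∀ Y ∈ C, X ⊆ Y ∨ Y ⊆ X) → X ∈ C)
    {w : α → M} (hw : ∀ Y ∈ C, ∑ i ∈ Y, w i = 0) {S : Finset α} (hS : S ∈ T) :
    ∑ i ∈ S, w i = 0 := by
  induction S using Finset.strongInduction with
  | H S ih =>
  rcases S.eq_empty_or_nonempty with rfl | hSne
  · exact sum_empty
  have hTop : T.sup id ∈ C :=
    hmax _ (sup_mem _ hempty (fun _ hA _ hB => hsup hA hB) T id fun _ h => h)
      fun Y hY => Or.inr (le_sup (f := id) (hCT hY))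
  obtain ⟨Y, hYf, hYmin⟩ := exists_min_image (C.filter (S ⊆ ·)) card
    ⟨_, mem_filter.2 ⟨hTop, le_sup (f := id) hS⟩⟩
  obtain ⟨hY, hSY⟩ := mem_filter.1 hYf
  have hemptyC : ∅ ∈ C := hmax ∅ hempty fun _ _ => Or.inl (empty_subset _)
  obtain ⟨Y', hY', hY'Y, hpred⟩ :=
    hC.exists_greatest_ssubset hemptyC ((hSne.mono hSY).empty_ssubset)
  have hSY' : ¬ S ⊆ Y' := fun h =>
    (card_lt_card hY'Y).not_ge (hYmin Y' (mem_filter.2 ⟨hY', h⟩))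
  have hXT : S ∪ Y' ∈ T := hsup hS (hCT hY')
  have hXY : S ∪ Y' ⊆ Y := union_subset hSY hY'Y.subset
  have hXC : S ∪ Y' ∈ C := hmax _ hXT fun Z hZ => by
    rcases hC.total hZ hY' with h | h
    · exact Or.inr (h.trans subset_union_right)
    rcases hC.total hZ hY with h' | h'
    · rcases h'.eq_or_ssubset with rfl | h'
      · exact Or.inl hXY
      · exact Or.inr ((hpred Z hZ h').trans subset_union_right)
    · exact Or.inl (hXY.trans h')
  have hXeq : S ∪ Y' = Y := hXY.eq_or_ssubset.resolve_right fun h =>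
    hSY' (subset_union_left.trans (hpred _ hXC h))
  have hinter : ∑ i ∈ S ∩ Y', w i = 0 :=
    ih _ (inf_lt_left.2 hSY') (hinf hS (hCT hY'))
  have := sum_union_inter (s₁ := S) (s₂ := Y') (f := w)
  rw [hXeq, hw Y hY, hw Y' hY', hinter] at this
  simpa using this.symm

theorem exists_isChain_spanning_tight [DecidableEq α] [Fintype α] {f : Finset α → ℝ}
    (hf : ∀ A B, f (A ∩ B) + f (A ∪ B) ≤ f A + f B) (hf₀ : f ∅ = 0) {v : α → ℝ}
    (hv : ∀ S, ∑ i ∈ S, v i ≤ f S) :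
    ∃ C : Finset (Finset α), (∀ Y ∈ C, ∑ i ∈ Y, v i = f Y) ∧
      IsChain (· ⊆ ·) (C : Set (Finset α)) ∧
      ∀ w : α → ℝ, (∀ Y ∈ C, ∑ i ∈ Y, w i = 0) → ∀ S, ∑ i ∈ S, v i = f S → ∑ i ∈ S, w i = 0 := by
  set T := univ.filter fun S => ∑ i ∈ S, v i = f S
  have htight : ∀ A ∈ T, ∀ B ∈ T, A ∩ B ∈ T ∧ A ∪ B ∈ T := by
    intro A hA B hB
    simp only [T, mem_filter, mem_univ, true_and] at hA hB ⊢
    have := sum_union_inter (s₁ := A) (s₂ := B) (f := v)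
    have := hf A B
    have := hv (A ∩ B)
    have := hv (A ∪ B)
    constructor <;> linarith
  obtain ⟨C, hCT, hC, hmax⟩ := exists_maximal_isChain_subset T
  refine ⟨C, fun Y hY => (mem_filter.1 (hCT hY)).2, hC, fun w hw S hS => ?_⟩
  exact hC.sum_eq_zero_of_maximal (by simp [T, hf₀]) (fun A hA B hB => (htight A hA B hB).2)
    (fun A hA B hB => (htight A hA B hB).1) hCT hmax hw (by simp [T, hS])

end Chain

section Perturbation

open Filter Topology

theorem eventually_add_mul_le {a b c : ℝ} (h : a ≤ b) (hc : a = b → c = 0) :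
    ∀ᶠ t in 𝓝 (0 : ℝ), a + t * c ≤ b := by
  rcases h.eq_or_lt with rfl | h
  · simp [hc rfl]
  · have : Tendsto (fun t : ℝ => a + t * c) (𝓝 0) (𝓝 a) :=
      (by fun_prop : Continuous fun t : ℝ => a + t * c).tendsto' 0 a (by simp)
    exact (this.eventually (eventually_lt_nhds h)).mono fun _ => le_of_lt

theorem eventually_le_add_mul {a b c : ℝ} (h : b ≤ a) (hc : a = b → c = 0) :
    ∀ᶠ t in 𝓝 (0 : ℝ), b ≤ a + t * c := by
  filter_upwards [eventually_add_mul_le (a := -a) (b := -b) (c := -c) (neg_le_neg h)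
    fun h' => by rw [hc (neg_inj.1 h'), neg_zero]] with t ht
  linarith

theorem eq_zero_of_mem_extremePoints {E : Type*} [AddCommGroup E] [Module ℝ E] {P : Set E}
    {v w : E} (hv : v ∈ P.extremePoints ℝ) (h : ∀ᶠ t in 𝓝 (0 : ℝ), v + t • w ∈ P) : w = 0 := by
  obtain ⟨ε, hε, hball⟩ := Metric.eventually_nhds_iff.1 h
  have hmem : ∀ t : ℝ, |t| = ε / 2 → v + t • w ∈ P := fun t ht =>
    hball (by rw [Real.dist_0_eq_abs, ht]; linarith)
  have hseg : v ∈ openSegment ℝ (v + (-(ε / 2)) • w) (v + (ε / 2) • w) :=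
    ⟨1 / 2, 1 / 2, by norm_num, by norm_num, by norm_num, by module⟩
  have := hv.2 (hmem _ (by rw [abs_neg, abs_of_pos (half_pos hε)]))
    (hmem _ (abs_of_pos (half_pos hε))) hseg
  simpa [hε.ne'] using this

end Perturbation

theorem mem_zero_half_one_of_mem_zmultiples {x : ℝ}
    (hx : x ∈ AddSubgroup.zmultiples (1 / 2 : ℝ)) (h₀ : 0 ≤ x) (h₁ : x ≤ 1) :
    x ∈ ({0, 1 / 2, 1} : Set ℝ) := by
  obtain ⟨k, rfl⟩ := AddSubgroup.mem_zmultiples_iff.1 hx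
  rw [zsmul_eq_mul] at h₀ h₁ ⊢
  have hk₀ : 0 ≤ k := by exact_mod_cast (by linarith : (0 : ℝ) ≤ k)
  have hk₂ : k ≤ 2 := by exact_mod_cast (by linarith : (k : ℝ) ≤ 2)
  interval_cases k <;> norm_num

theorem intCast_mem_zmultiples_half (k : ℤ) : (k : ℝ) ∈ AddSubgroup.zmultiples (1 / 2 : ℝ) :=
  AddSubgroup.mem_zmultiples_iff.2 ⟨2 * k, by rw [zsmul_eq_mul]; push_cast; ring⟩

theorem natCast_mem_zmultiples_half (n : ℕ) : (n : ℝ) ∈ AddSubgroup.zmultiples (1 / 2 : ℝ) := by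
  exact_mod_cast intCast_mem_zmultiples_half n

section TwoMatroidPolytope

open Filter Topology

variable {F1 F2 D : Type*} [Fintype F1] [Fintype F2]

def polytopeP' (M' : Matroid (F1 ⊕ F2)) (M2 : Matroid F2) (F' G' : D → Finset F1)
    (lb1 ub1 lb2 ub2 lb ub : ℤ) : Set (F1 ⊕ F2 → ℝ) :=
  {v | (∀ i, 0 ≤ v i) ∧
      (∀ S : Finset (F1 ⊕ F2), ∑ i ∈ S, v i ≤ (matroidRank M' S : ℝ)) ∧
      (∀ S : Finset F2, ∑ i ∈ S, v (Sum.inr i) ≤ (matroidRank M2 S : ℝ)) ∧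
      ((lb1 : ℝ) ≤ ∑ i : F1, v (Sum.inl i)) ∧
      (∑ i : F1, v (Sum.inl i) ≤ (ub1 : ℝ)) ∧
      ((lb2 : ℝ) ≤ ∑ i : F2, v (Sum.inr i)) ∧
      (∑ i : F2, v (Sum.inr i) ≤ (ub2 : ℝ)) ∧
      ((lb : ℝ) ≤ ∑ i, v i) ∧ (∑ i, v i ≤ (ub : ℝ)) ∧
      (∀ j : D, (1/2 : ℝ) ≤ ∑ i ∈ F' j, v (Sum.inl i) ∧
        ∑ i ∈ G' j, v (Sum.inl i) ≤ 1)}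

variable [Fintype D]

/-- The sets whose sums are bounded in `polytopeP'` by something other than a matroid rank. -/
noncomputable def sideConstraintSets (F' G' : D → Finset F1) : Finset (Finset (F1 ⊕ F2)) :=
  {univ, univ.map .inl, univ.map .inr} ∪ univ.image (fun j => (F' j).map .inl) ∪
    univ.image (fun j => (G' j).map .inl)

theorem isLaminar_image_map_inr_union_sideConstraintSets {F' G' : D → Finset F1}
    (hFG : ∀ j, F' j ⊆ G' j) (hdisj : ∀ j k, j ≠ k → Disjoint (G' j) (G' k))
    {C : Finset (Finset F2)} (hC : IsLaminar (C : Set (Finset F2))) :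
    IsLaminar (↑(C.image (·.map .inr) ∪ sideConstraintSets F' G') : Set (Finset (F1 ⊕ F2))) := by
  refine ((((isLaminar_range_union_range hFG hdisj).insert_univ.image_map .inl).union
    (hC.insert_univ.image_map .inr) ?_).insert_univ).mono ?_
  · rintro _ ⟨A, -, rfl⟩ _ ⟨B, -, rfl⟩
    exact Or.inr (Or.inr (disjoint_map_inl_map_inr A B))
  · intro S hS
    simp only [sideConstraintSets, coe_union, coe_image, coe_insert, coe_singleton, Set.mem_union,
      Set.mem_insert_iff, Set.mem_singleton_iff, Set.mem_image, mem_coe, coe_univ, Set.image_univ,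
      Set.mem_range] at hS
    rcases hS with ⟨A, hA, rfl⟩ | ((rfl | rfl | rfl) | ⟨j, rfl⟩) | ⟨j, rfl⟩
    · exact Or.inr (Or.inr ⟨A, Or.inr hA, rfl⟩)
    · exact Or.inl rfl
    · exact Or.inr (Or.inl ⟨univ, Or.inl rfl, rfl⟩)
    · exact Or.inr (Or.inr ⟨univ, Or.inl rfl, rfl⟩)
    · exact Or.inr (Or.inl ⟨F' j, Or.inr (Or.inl ⟨j, rfl⟩), rfl⟩)
    · exact Or.inr (Or.inl ⟨G' j, Or.inr (Or.inr ⟨j, rfl⟩), rfl⟩)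

theorem eventually_add_smul_mem_polytopeP' {M' : Matroid (F1 ⊕ F2)} {M2 : Matroid F2}
    {F' G' : D → Finset F1} {lb1 ub1 lb2 ub2 lb ub : ℤ} {v w : F1 ⊕ F2 → ℝ}
    (hv : v ∈ polytopeP' M' M2 F' G' lb1 ub1 lb2 ub2 lb ub) (h₀ : ∀ i, v i = 0 → w i = 0)
    (hM' : ∀ S, ∑ i ∈ S, v i = matroidRank M' S → ∑ i ∈ S, w i = 0)
    (hM2 : ∀ S, ∑ i ∈ S, v (.inr i) = matroidRank M2 S → ∑ i ∈ S, w (.inr i) = 0)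
    (hside : ∀ S ∈ sideConstraintSets F' G',
      ∑ i ∈ S, v i ∈ AddSubgroup.zmultiples (1 / 2 : ℝ) → ∑ i ∈ S, w i = 0) :
    ∀ᶠ t in 𝓝 (0 : ℝ), v + t • w ∈ polytopeP' M' M2 F' G' lb1 ub1 lb2 ub2 lb ub := by
  obtain ⟨hv₀, hvM', hvM2, hl₁, hu₁, hl₂, hu₂, hl, hu, hvD⟩ := hv
  have hside' : ∀ S ∈ sideConstraintSets F' G', ∀ x ∈ AddSubgroup.zmultiples (1 / 2 : ℝ),
      ∑ i ∈ S, v i = x → ∑ i ∈ S, w i = 0 := fun S hS x hx h => hside S hS (h ▸ hx)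
  have hF1 := hside' (univ.map .inl) (by simp [sideConstraintSets])
  have hF2 := hside' (univ.map .inr) (by simp [sideConstraintSets])
  have huniv := hside' univ (by simp [sideConstraintSets])
  have hF' := fun j => hside' ((F' j).map .inl) (by simp [sideConstraintSets])
  have hG' := fun j => hside' ((G' j).map .inl) (by simp [sideConstraintSets])
  simp only [sum_map, Function.Embedding.inl_apply, Function.Embedding.inr_apply] at hF1 hF2 hF' hG'
  have hint := intCast_mem_zmultiples_half
  simp only [polytopeP', Set.mem_ofPred_eq, Pi.add_apply, Pi.smul_apply, smul_eq_mul,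
    sum_add_distrib, ← mul_sum, eventually_and, eventually_all]
  exact ⟨fun i => eventually_le_add_mul (hv₀ i) (h₀ i),
    fun S => eventually_add_mul_le (hvM' S) (hM' S),
    fun S => eventually_add_mul_le (hvM2 S) (hM2 S),
    eventually_le_add_mul hl₁ (hF1 _ (hint _)), eventually_add_mul_le hu₁ (hF1 _ (hint _)),
    eventually_le_add_mul hl₂ (hF2 _ (hint _)), eventually_add_mul_le hu₂ (hF2 _ (hint _)),
    eventually_le_add_mul hl (huniv _ (hint _)), eventually_add_mul_le hu (huniv _ (hint _)),
    fun j => ⟨eventually_le_add_mul (hvD j).1 (hF' j _ (AddSubgroup.mem_zmultiples _)),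
      eventually_add_mul_le (hvD j).2 (hG' j _ (by exact_mod_cast hint 1))⟩⟩

theorem exists_isLaminar_sumsDetermine {M' : Matroid (F1 ⊕ F2)} {M2 : Matroid F2}
    {F' G' : D → Finset F1} {lb1 ub1 lb2 ub2 lb ub : ℤ} (hFG : ∀ j, F' j ⊆ G' j)
    (hdisj : ∀ j k, j ≠ k → Disjoint (G' j) (G' k)) {v : F1 ⊕ F2 → ℝ}
    (hv : v ∈ (polytopeP' M' M2 F' G' lb1 ub1 lb2 ub2 lb ub).extremePoints ℝ) :
    ∃ L₁ L₂ : Finset (Finset (F1 ⊕ F2)), IsLaminar (L₁ : Set (Finset (F1 ⊕ F2))) ∧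
      IsLaminar (L₂ : Set (Finset (F1 ⊕ F2))) ∧
      (∀ S ∈ L₁ ∪ L₂, ∑ i ∈ S, v i ∈ AddSubgroup.zmultiples (1 / 2 : ℝ)) ∧
      SumsDetermine ℝ (L₁ ∪ L₂) univ := by
  obtain ⟨-, hvM', hvM2, -⟩ := hv.1
  obtain ⟨C₁, hC₁, hC₁chain, hC₁span⟩ := exists_isChain_spanning_tight
    (fun A B => by exact_mod_cast matroidRank_inter_add_matroidRank_union_le M' A B) (by simp) hvM'
  obtain ⟨C₂, hC₂, hC₂chain, hC₂span⟩ := exists_isChain_spanning_tight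
    (fun A B => by exact_mod_cast matroidRank_inter_add_matroidRank_union_le M2 A B) (by simp) hvM2
  set G := AddSubgroup.zmultiples (1 / 2 : ℝ)
  set B₁ := C₁ ∪ univ.image singleton
  set B₂ := C₂.image (·.map .inr) ∪ sideConstraintSets F' G'
  -- Keeping the sets with half-integral sums keeps in particular all tight ones.
  refine ⟨B₁.filter fun S => ∑ i ∈ S, v i ∈ G, B₂.filter fun S => ∑ i ∈ S, v i ∈ G,
    hC₁chain.isLaminar.union_range_singleton.mono
      ((coe_subset.2 (filter_subset _ _)).trans (by simp [B₁])),
    (isLaminar_image_map_inr_union_sideConstraintSets hFG hdisj hC₂chain.isLaminar).mono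
      (coe_subset.2 (filter_subset _ _)),
    fun S hS => by rcases mem_union.1 hS with hS | hS <;> exact (mem_filter.1 hS).2,
    fun w hw => ?_⟩
  have hw₁ : ∀ S ∈ B₁, ∑ i ∈ S, v i ∈ G → ∑ i ∈ S, w i = 0 :=
    fun S hS hSG => hw S (mem_union_left _ (mem_filter.2 ⟨hS, hSG⟩))
  have hw₂ : ∀ S ∈ B₂, ∑ i ∈ S, v i ∈ G → ∑ i ∈ S, w i = 0 :=
    fun S hS hSG => hw S (mem_union_right _ (mem_filter.2 ⟨hS, hSG⟩))
  refine fun i _ => congrFun (eq_zero_of_mem_extremePoints hv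
    (eventually_add_smul_mem_polytopeP' hv.1 (fun i hi => ?_) (hC₁span w fun Y hY => ?_)
      (hC₂span _ fun Y hY => ?_) fun S hS => hw₂ S (mem_union_right _ hS))) i
  · simpa using hw₁ {i} (mem_union_right _ (mem_image_of_mem _ (mem_univ i))) (by simp [hi])
  · exact hw₁ Y (mem_union_left _ hY) (by rw [hC₁ Y hY]; exact natCast_mem_zmultiples_half _)
  · simpa using hw₂ (Y.map .inr) (mem_union_left _ (mem_image_of_mem _ hY))
      (by rw [sum_map]; exact (hC₂ Y hY).symm ▸ natCast_mem_zmultiples_half _)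

end TwoMatroidPolytope

theorem polytope_P'_half_integral_general
    {F1 F2 D : Type*} [Fintype F1] [Fintype F2] [Fintype D]
    (M' : Matroid (F1 ⊕ F2))
    (M2 : Matroid F2)
    (F' G' : D → Finset F1)
    (hFG : ∀ j, F' j ⊆ G' j)
    (hdisj : ∀ j k, j ≠ k → Disjoint (G' j) (G' k))
    (lb1 ub1 lb2 ub2 lb ub : ℤ)
    (P : Set (F1 ⊕ F2 → ℝ))
    (hP : P = {v | (∀ i, 0 ≤ v i) ∧
      (∀ S : Finset (F1 ⊕ F2), ∑ i ∈ S, v i ≤ (matroidRank M' S : ℝ)) ∧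
      (∀ S : Finset F2, ∑ i ∈ S, v (Sum.inr i) ≤ (matroidRank M2 S : ℝ)) ∧
      ((lb1 : ℝ) ≤ ∑ i : F1, v (Sum.inl i)) ∧
      (∑ i : F1, v (Sum.inl i) ≤ (ub1 : ℝ)) ∧
      ((lb2 : ℝ) ≤ ∑ i : F2, v (Sum.inr i)) ∧
      (∑ i : F2, v (Sum.inr i) ≤ (ub2 : ℝ)) ∧
      ((lb : ℝ) ≤ ∑ i, v i) ∧ (∑ i, v i ≤ (ub : ℝ)) ∧
      (∀ j : D, (1/2 : ℝ) ≤ ∑ i ∈ F' j, v (Sum.inl i) ∧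
        ∑ i ∈ G' j, v (Sum.inl i) ≤ 1)}) :
    ∀ v ∈ P.extremePoints ℝ, ∀ i, v i ∈ ({0, 1/2, 1} : Set ℝ) := by
  change P = polytopeP' M' M2 F' G' lb1 ub1 lb2 ub2 lb ub at hP
  subst hP
  intro v hv i
  obtain ⟨L₁, L₂, hL₁, hL₂, hvL, hdet⟩ := exists_isLaminar_sumsDetermine hFG hdisj hv
  refine mem_zero_half_one_of_mem_zmultiples (hL₁.mem_of_sumsDetermine _ hL₂ hvL hdet i)
    (hv.1.1 i) ?_
  simpa using (hv.1.2.1 {i}).trans (by exact_mod_cast matroidRank_le_card M' {i})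

/-- Every extreme point of the polytope `𝒫'` (used for two-matroid median) is
half-integral. -/
theorem polytope_P'_half_integral
    {F1 F2 D : Type*} [Fintype F1] [Fintype F2] [Fintype D]
    (M' : Matroid (F1 ⊕ F2)) (hM'E : M'.E = Set.univ)
    (M2 : Matroid F2) (hM2E : M2.E = Set.univ)
    (F' G' : D → Finset F1)
    (hFG : ∀ j, F' j ⊆ G' j)
    (hdisj : ∀ j k, j ≠ k → Disjoint (G' j) (G' k))
    (lb1 ub1 lb2 ub2 lb ub : ℤ)
    (h1 : lb1 ≤ ub1) (h2 : lb2 ≤ ub2) (h : lb ≤ ub)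
    (P : Set (F1 ⊕ F2 → ℝ))
    (hP : P = {v | (∀ i, 0 ≤ v i) ∧
      (∀ S : Finset (F1 ⊕ F2), ∑ i ∈ S, v i ≤ (matroidRank M' S : ℝ)) ∧
      (∀ S : Finset F2, ∑ i ∈ S, v (Sum.inr i) ≤ (matroidRank M2 S : ℝ)) ∧
      ((lb1 : ℝ) ≤ ∑ i : F1, v (Sum.inl i)) ∧
      (∑ i : F1, v (Sum.inl i) ≤ (ub1 : ℝ)) ∧
      ((lb2 : ℝ) ≤ ∑ i : F2, v (Sum.inr i)) ∧
      (∑ i : F2, v (Sum.inr i) ≤ (ub2 : ℝ)) ∧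
      ((lb : ℝ) ≤ ∑ i, v i) ∧ (∑ i, v i ≤ (ub : ℝ)) ∧
      (∀ j : D, (1/2 : ℝ) ≤ ∑ i ∈ F' j, v (Sum.inl i) ∧
        ∑ i ∈ G' j, v (Sum.inl i) ≤ 1)}) :
    ∀ v ∈ P.extremePoints ℝ, ∀ i, v i ∈ ({0, 1/2, 1} : Set ℝ) :=
  polytope_P'_half_integral_general M' M2 F' G' hFG hdisj lb1 ub1 lb2 ub2 lb ub P hP
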